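/- arXiv:2208.09254 — 2 statements merged into one kernel-verified Lean document; each statement's English description precedes it below -/
import Mathlib

section
/- For every k ≥ 2, every IMAB instance I = (f_1, …, f_k), and every time horizon T ≥ 2k that is a multiple of k, the round-robin algorithm satisfies OPT(I,T) ≤ 8k²·RR(I,T); i.e., the competitive ratio of round-robin is at most 8k². -/
open scoped Classical

/-- A reward function: bounded in [0,1], nondecreasing, with decreasing marginal returns. -/
def IsRewardFn (f : ℕ → ℝ) : Prop :=
  (∀ n, 0 ≤ f n) ∧ (∀ n, f n ≤ 1) ∧ Monotone f ∧
    ∀ n, 1 ≤ n → f (n + 1) - f n ≤ f n - f (n - 1)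

/-- Cumulative reward from pulling an arm with reward function `f` for `N` pulls. -/
noncomputable def Rew (f : ℕ → ℝ) (N : ℕ) : ℝ := ∑ n ∈ Finset.Icc 1 N, f n

/-- Offline optimum: the best total reward over all allocations of `T` pulls to the `k` arms. -/
noncomputable def OPT {k : ℕ} (f : Fin k → ℕ → ℝ) (T : ℕ) : ℝ :=
  sSup {x : ℝ | ∃ M : Fin k → ℕ, (∑ i, M i) = T ∧ x = ∑ i, Rew (f i) (M i)}

/-!
Discrete concavity together with `f 0 ≥ 0` makes `n ↦ f n / n` nonincreasing. Hence
`f (k * m) ≤ k * f m`, and `f n ≥ (n / m) * f m` for `n ≤ m` gives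
`(m + 1) * f m ≤ 2 * Rew f m`. So an arm pulled `N ≤ k * m` times earns at most
`N * f N ≤ k * m * k * f m ≤ 2 k² Rew f m`. Every arm of an allocation of `T` pulls gets
at most `T ≤ 2k · (T / k)` of them, which yields the factor `2 (2k)² = 8k²`.
-/

theorem rew_zero (f : ℕ → ℝ) : Rew f 0 = 0 := by
  simp [Rew]

theorem rew_succ (f : ℕ → ℝ) (n : ℕ) : Rew f (n + 1) = Rew f n + f (n + 1) :=
  Finset.sum_Icc_succ_top (Nat.le_add_left 1 n) f

theorem rew_nonneg {f : ℕ → ℝ} (hf : ∀ n, 0 ≤ f n) (N : ℕ) : 0 ≤ Rew f N :=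
  Finset.sum_nonneg fun n _ => hf n

theorem rew_le_mul_apply {f : ℕ → ℝ} (hf : Monotone f) (N : ℕ) : Rew f N ≤ N * f N := by
  calc Rew f N ≤ ∑ _n ∈ Finset.Icc 1 N, f N :=
        Finset.sum_le_sum fun n hn => hf (Finset.mem_Icc.mp hn).2
    _ = N * f N := by simp

namespace IsRewardFn

variable {f : ℕ → ℝ}

theorem nonneg (hf : IsRewardFn f) (n : ℕ) : 0 ≤ f n := hf.1 n

theorem monotone (hf : IsRewardFn f) : Monotone f := hf.2.2.1

theorem antitone_increments (hf : IsRewardFn f) : Antitone fun n => f (n + 1) - f n :=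
  antitone_nat_of_succ_le fun n => hf.2.2.2 (n + 1) (Nat.le_add_left 1 n)

theorem mul_sub_le_sub_apply_zero (hf : IsRewardFn f) (n : ℕ) :
    n * (f (n + 1) - f n) ≤ f n - f 0 := by
  induction n with
  | zero => simp
  | succ n ih =>
    push_cast
    nlinarith [hf.antitone_increments n.le_succ, (Nat.cast_nonneg n : (0 : ℝ) ≤ n)]

theorem mul_apply_succ_le (hf : IsRewardFn f) (n : ℕ) : n * f (n + 1) ≤ (n + 1) * f n := by
  nlinarith [hf.mul_sub_le_sub_apply_zero n, hf.nonneg 0]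

theorem mul_apply_le_mul_apply (hf : IsRewardFn f) {n m : ℕ} (hnm : n ≤ m) :
    n * f m ≤ m * f n := by
  induction m, hnm using Nat.le_induction with
  | base => rfl
  | succ m hnm ih =>
    rcases Nat.eq_zero_or_pos m with rfl | hm
    · obtain rfl : n = 0 := Nat.le_zero.mp hnm
      simpa using hf.nonneg 0
    have hm' : (0 : ℝ) < m := Nat.cast_pos.mpr hm
    have hn : (0 : ℝ) ≤ n := Nat.cast_nonneg n
    refine le_of_mul_le_mul_left ?_ hm'
    push_cast
    nlinarith [hf.mul_apply_succ_le m,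
      mul_le_mul_of_nonneg_left ih (by positivity : (0 : ℝ) ≤ m + 1)]

theorem apply_mul_le (hf : IsRewardFn f) {k m : ℕ} (hk : 0 < k) (hm : 0 < m) :
    f (k * m) ≤ k * f m := by
  have h := hf.mul_apply_le_mul_apply (Nat.le_mul_of_pos_left m hk)
  push_cast at h
  have hm' : (0 : ℝ) < m := Nat.cast_pos.mpr hm
  nlinarith

theorem succ_mul_apply_le_two_mul_rew (hf : IsRewardFn f) {m : ℕ} (hm : 1 ≤ m) :
    (m + 1) * f m ≤ 2 * Rew f m := by
  induction m, hm using Nat.le_induction with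
  | base => norm_num [rew_succ, rew_zero]
  | succ m _ ih =>
    rw [rew_succ]
    push_cast
    linarith [hf.mul_apply_succ_le m]

theorem rew_le_two_mul_sq_mul_rew (hf : IsRewardFn f) {k m N : ℕ} (hk : 0 < k) (hm : 0 < m)
    (hN : N ≤ k * m) :
    Rew f N ≤ 2 * k ^ 2 * Rew f m := by
  calc Rew f N ≤ N * f N := rew_le_mul_apply hf.monotone N
    _ ≤ (k * m) * f (k * m) := by
        gcongr
        exacts [hf.nonneg _, by exact_mod_cast hN, hf.monotone hN]
    _ ≤ (k * m) * (k * f m) := by gcongr; exact hf.apply_mul_le hk hm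
    _ = k ^ 2 * (m * f m) := by ring
    _ ≤ k ^ 2 * ((m + 1) * f m) := by
        gcongr
        exacts [hf.nonneg m, le_add_of_nonneg_right zero_le_one]
    _ ≤ k ^ 2 * (2 * Rew f m) :=
        mul_le_mul_of_nonneg_left (hf.succ_mul_apply_le_two_mul_rew hm) (by positivity)
    _ = 2 * k ^ 2 * Rew f m := by ring

end IsRewardFn

theorem le_two_mul_mul_div {k T : ℕ} (hk : 0 < k) (hkT : k ≤ T) : T ≤ 2 * k * (T / k) := by
  have h₁ := Nat.lt_mul_div_succ T hk
  have h₂ : k ≤ k * (T / k) := Nat.le_mul_of_pos_right k (Nat.div_pos hkT hk)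
  rw [Nat.mul_succ] at h₁
  rw [Nat.mul_assoc]
  omega

theorem round_robin_upper_bound_general (k T : ℕ) (hT : 2 * k ≤ T)
    (f : Fin k → ℕ → ℝ) (hf : ∀ i, IsRewardFn (f i)) :
    OPT f T ≤ 8 * (k : ℝ) ^ 2 * ∑ i, Rew (f i) (T / k) := by
  have hRR : 0 ≤ ∑ i, Rew (f i) (T / k) :=
    Finset.sum_nonneg fun i _ => rew_nonneg (hf i).nonneg _
  refine Real.sSup_le ?_ (by positivity)
  rintro _ ⟨M, hM, rfl⟩
  rw [Finset.mul_sum]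
  refine Finset.sum_le_sum fun i _ => ?_
  have hk : 0 < k := i.pos
  have hMi : M i ≤ 2 * k * (T / k) := calc
    M i ≤ T := hM ▸ Finset.single_le_sum (fun j _ => Nat.zero_le (M j)) (Finset.mem_univ i)
    _ ≤ 2 * k * (T / k) := le_two_mul_mul_div hk (by omega)
  calc Rew (f i) (M i) ≤ 2 * ((2 * k : ℕ) : ℝ) ^ 2 * Rew (f i) (T / k) :=
        (hf i).rew_le_two_mul_sq_mul_rew (by omega) (Nat.div_pos (by omega) hk) hMi
    _ = 8 * (k : ℝ) ^ 2 * Rew (f i) (T / k) := by push_cast; ring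

/-- The competitive ratio of the round-robin algorithm is at most `8k²`: for every instance
and every horizon `T ≥ 2k` that is a multiple of `k`,
`OPT(I,T) ≤ 8k² · RR(I,T)` where `RR(I,T) = ∑ i, Rew (f i) (T / k)`. -/
theorem round_robin_upper_bound (k T : ℕ) (hk : 2 ≤ k) (hT : 2 * k ≤ T) (hdvd : k ∣ T)
    (f : Fin k → ℕ → ℝ) (hf : ∀ i, IsRewardFn (f i)) :
    OPT f T ≤ 8 * (k : ℝ) ^ 2 * ∑ i, Rew (f i) (T / k) :=
  round_robin_upper_bound_general k T hT f hf
end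

section
/- Run Algorithm 1 on an IMAB instance I = (f_1, …, f_k). For every N ≥ 2 and every arm i ∈ {1,…,k}: if arm i is the first arm to cross N pulls — i.e., at the time step t at which Algorithm 1 pulls arm i for the (N+1)-th time, every arm j satisfies N_j(t) ≤ N — then Rew_{f_i}(N) = OPT(I,N). -/
/-!
Past the round-robin warm-up (which `N ≥ 2` forces), the pulled arm `i` maximizes the optimistic
estimate. With every count at most `N = Nᵢ`, the estimate of `i` is exactly `Rew fᵢ N`, while by
concavity the estimate of any arm `j` bounds `Rew fⱼ N` from above; so `i` has the best `N`-step
reward. As `Rew f M / M` is nondecreasing in `M`, any allocation `M` of `N` pulls then earns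
`∑ Rew fⱼ Mⱼ ≤ ∑ (Mⱼ / N) Rew fⱼ N ≤ Rew fᵢ N`.
-/

open scoped Classical

/-- The arm pulled by Algorithm 1 (Horizon-Unaware Improving Bandits) at (0-indexed) step `t`,
given the current pull counts `N`.  During the first `2 * k` steps each arm is pulled twice,
in round-robin order; afterwards the algorithm pulls an arm maximizing the optimistic estimate
`p i`, breaking ties in favor of the smallest count `N i` and then the smallest index. -/
noncomputable def alg1Pull {k : ℕ} [NeZero k] (f : Fin k → ℕ → ℝ)
    (N : Fin k → ℕ) (t : ℕ) : Fin k :=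
  if t < 2 * k then ⟨t % k, Nat.mod_lt t (NeZero.pos k)⟩
  else
    let Nstar := Finset.univ.sup N
    let p : Fin k → ℝ := fun i =>
      Rew (f i) (N i) + ∑ n ∈ Finset.Icc 1 (Nstar - N i),
        (f i (N i) + (n : ℝ) * (f i (N i) - f i (N i - 1)))
    ((Finset.univ.filter fun i : Fin k =>
        (∀ j, p j ≤ p i) ∧ ∀ j, (∀ l, p l ≤ p j) → N i ≤ N j).min).getD
      ⟨0, NeZero.pos k⟩

/-- `alg1Counts f t i` is the number of pulls of arm `i` made by Algorithm 1
during the first `t` steps on the instance `f`. -/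
noncomputable def alg1Counts {k : ℕ} [NeZero k] (f : Fin k → ℕ → ℝ) : ℕ → Fin k → ℕ
  | 0 => fun _ => 0
  | t + 1 => fun i =>
      alg1Counts f t i + if alg1Pull f (alg1Counts f t) t = i then 1 else 0

open Finset

lemma antitone_increments {f : ℕ → ℝ} (hf : ∀ n, 1 ≤ n → f (n + 1) - f n ≤ f n - f (n - 1)) :
    Antitone fun n => f (n + 1) - f n :=
  antitone_nat_of_succ_le fun n => hf (n + 1) n.succ_pos

lemma le_add_mul_increment {f : ℕ → ℝ} (hf : ∀ n, 1 ≤ n → f (n + 1) - f n ≤ f n - f (n - 1))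
    {c : ℕ} (hc : 1 ≤ c) (n : ℕ) : f (c + n) ≤ f c + n * (f c - f (c - 1)) := by
  induction n with
  | zero => simp
  | succ n ih =>
    have hinc : f (c + n + 1) - f (c + n) ≤ f (c - 1 + 1) - f (c - 1) :=
      antitone_increments hf (by omega : c - 1 ≤ c + n)
    rw [Nat.sub_add_cancel hc] at hinc
    push_cast
    rw [← add_assoc]
    linarith

lemma Rew_succ (f : ℕ → ℝ) (N : ℕ) : Rew f (N + 1) = Rew f N + f (N + 1) :=
  sum_Icc_succ_top (by omega) f

lemma Rew_le_mul (f : ℕ → ℝ) (hf : Monotone f) (M : ℕ) : Rew f M ≤ M * f M := by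
  simpa [Rew] using sum_le_card_nsmul (Icc 1 M) f (f M) fun n hn => hf (mem_Icc.mp hn).2

/-- The average reward `Rew f N / N` of a nondecreasing `f` is nondecreasing in `N`. -/
lemma mul_Rew_le_mul_Rew (f : ℕ → ℝ) (hf : Monotone f) {M N : ℕ} (h : M ≤ N) :
    N * Rew f M ≤ M * Rew f N := by
  induction N, h using Nat.le_induction with
  | base => rfl
  | succ N hMN ih =>
    have hfM : Rew f M ≤ M * f (N + 1) :=
      (Rew_le_mul f hf M).trans <| by gcongr; exact hf (by omega)
    rw [Rew_succ]
    push_cast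
    linarith

/-- `optimisticRew (f i) (N i) (Finset.univ.sup N)` is the estimate `p i` computed in `alg1Pull`. -/
noncomputable def optimisticRew (f : ℕ → ℝ) (c M : ℕ) : ℝ :=
  Rew f c + ∑ n ∈ Icc 1 (M - c), (f c + n * (f c - f (c - 1)))

lemma optimisticRew_self (f : ℕ → ℝ) (M : ℕ) : optimisticRew f M M = Rew f M := by
  simp [optimisticRew]

lemma Rew_le_optimisticRew {f : ℕ → ℝ} (hf : ∀ n, 1 ≤ n → f (n + 1) - f n ≤ f n - f (n - 1))
    {c M : ℕ} (hc : 1 ≤ c) (hcM : c ≤ M) : Rew f M ≤ optimisticRew f c M := by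
  obtain ⟨m, rfl⟩ := Nat.exists_eq_add_of_le hcM
  induction m with
  | zero => rw [add_zero, optimisticRew_self]
  | succ m ih =>
    have hchord := le_add_mul_increment hf hc (m + 1)
    rw [← add_assoc] at hchord
    rw [optimisticRew, Nat.add_sub_cancel_left, ← add_assoc, Rew_succ, sum_Icc_succ_top (by omega)]
    rw [optimisticRew, Nat.add_sub_cancel_left] at ih
    linarith [ih (by omega)]

lemma OPT_eq_Rew_of_forall_Rew_le {k : ℕ} (f : Fin k → ℕ → ℝ) (hf : ∀ j, Monotone (f j)) {N : ℕ} (hN : 0 < N)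
    (i : Fin k) (hbest : ∀ j, Rew (f j) N ≤ Rew (f i) N) : OPT f N = Rew (f i) N := by
  refine IsGreatest.csSup_eq ⟨⟨Pi.single i N, by simp, ?_⟩, ?_⟩
  · rw [sum_eq_single i (fun j _ hj => by simp [hj, Rew]) (by simp)]
    simp
  · rintro x ⟨M, hM, rfl⟩
    have hMN : ∀ j, M j ≤ N := fun j => hM ▸ single_le_sum (fun _ _ => Nat.zero_le _) (mem_univ j)
    refine le_of_mul_le_mul_left ?_ (Nat.cast_pos.mpr hN)
    calc (N : ℝ) * ∑ j, Rew (f j) (M j) = ∑ j, N * Rew (f j) (M j) := mul_sum ..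
      _ ≤ ∑ j, M j * Rew (f i) N := sum_le_sum fun j _ =>
          (mul_Rew_le_mul_Rew (f j) (hf j) (hMN j)).trans (by gcongr; exact hbest j)
      _ = N * Rew (f i) N := by rw [← sum_mul, ← Nat.cast_sum, hM]

lemma Finset.min_getD_mem {α : Type*} [LinearOrder α] {s : Finset α} (hs : s.Nonempty) (d : α) :
    s.min.getD d ∈ s := by
  rw [← coe_min' hs]
  exact min'_mem s hs

lemma exists_argmax_argmin {ι : Type*} [Fintype ι] [Nonempty ι] (p : ι → ℝ) (c : ι → ℕ) :
    ∃ i, (∀ j, p j ≤ p i) ∧ ∀ j, (∀ l, p l ≤ p j) → c i ≤ c j := by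
  obtain ⟨m, -, hm⟩ := exists_max_image univ p univ_nonempty
  obtain ⟨i, hi, hci⟩ := exists_min_image (univ.filter fun i => ∀ j, p j ≤ p i) c
    ⟨m, by simpa using fun j => hm j (mem_univ j)⟩
  exact ⟨i, by simpa using hi, fun j hj => hci j (by simpa using hj)⟩

section Algorithm

variable {k : ℕ} [NeZero k] (f : Fin k → ℕ → ℝ)

lemma alg1Pull_val_of_lt (C : Fin k → ℕ) {t : ℕ} (ht : t < 2 * k) :
    (alg1Pull f C t : ℕ) = if t < k then t else t - k := by
  rw [alg1Pull, if_pos ht]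
  show t % k = _
  split_ifs with htk
  · exact Nat.mod_eq_of_lt htk
  · rw [Nat.mod_eq_sub_mod (by omega), Nat.mod_eq_of_lt (by omega)]

/-- During the round-robin warm-up, arm `j` has been pulled once for each of the steps `j` and
`j + k` that already passed. -/
lemma alg1Counts_of_le_two_mul (j : Fin k) {t : ℕ} (ht : t ≤ 2 * k) :
    alg1Counts f t j = (if (j : ℕ) < t then 1 else 0) + if (j : ℕ) + k < t then 1 else 0 := by
  induction t with
  | zero => simp [alg1Counts]
  | succ t ih =>
    have hpull := alg1Pull_val_of_lt f (alg1Counts f t) (t := t) (by omega)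
    show alg1Counts f t j + _ = _
    rw [ih (by omega)]
    simp only [Fin.ext_iff, hpull]
    have := j.isLt
    split_ifs <;> omega

lemma alg1Counts_pulled_le_one {t : ℕ} (ht : t < 2 * k) :
    alg1Counts f t (alg1Pull f (alg1Counts f t) t) ≤ 1 := by
  have hpull := alg1Pull_val_of_lt f (alg1Counts f t) ht
  rw [alg1Counts_of_le_two_mul f _ ht.le, hpull]
  split_ifs <;> omega

lemma two_le_alg1Counts (j : Fin k) {t : ℕ} (ht : 2 * k ≤ t) : 2 ≤ alg1Counts f t j := by
  have hmono : Monotone fun t => alg1Counts f t j :=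
    monotone_nat_of_le_succ fun t => Nat.le_add_right _ _
  have := j.isLt
  calc 2 = alg1Counts f (2 * k) j := by rw [alg1Counts_of_le_two_mul f j le_rfl]; split_ifs <;> omega
    _ ≤ alg1Counts f t j := hmono ht

lemma optimisticRew_le_alg1Pull (C : Fin k → ℕ) {t : ℕ} (ht : 2 * k ≤ t) (j : Fin k) :
    optimisticRew (f j) (C j) (univ.sup C) ≤
      optimisticRew (f (alg1Pull f C t)) (C (alg1Pull f C t)) (univ.sup C) := by
  rw [alg1Pull, if_neg (by omega)]
  have hne := filter_nonempty_iff.mpr <|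
    (exists_argmax_argmin (fun j => optimisticRew (f j) (C j) (univ.sup C)) C).imp
      fun _ h => ⟨mem_univ _, h⟩
  have hmem := Finset.min_getD_mem hne ⟨0, NeZero.pos k⟩
  rw [mem_filter] at hmem
  -- `convert` reconciles the decidability instances with those elaborated inside `alg1Pull`.
  convert hmem.2.1 j using 3 <;> rfl

end Algorithm

/-- If arm `i` is the first arm that Algorithm 1 pulls for the `(N+1)`-th time (i.e., at the
step `t` where this pull happens every arm `j` has at most `N` pulls so far), then the
cumulative reward of arm `i` after `N` pulls equals the offline optimum for horizon `N`. -/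
theorem first_arm_to_cross_N_pulls (k : ℕ) [NeZero k] (f : Fin k → ℕ → ℝ)
    (hf : ∀ i, IsRewardFn (f i)) (N : ℕ) (hN : 2 ≤ N) (i : Fin k) (t : ℕ)
    (hpull : alg1Pull f (alg1Counts f t) t = i)
    (hcount : alg1Counts f t i = N)
    (hfirst : ∀ j, alg1Counts f t j ≤ N) :
    Rew (f i) N = OPT f N := by
  have hwarm : 2 * k ≤ t := by
    by_contra! ht
    have := alg1Counts_pulled_le_one f ht
    rw [hpull, hcount] at this
    omega
  have hsup : univ.sup (alg1Counts f t) = N :=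
    le_antisymm (Finset.sup_le fun j _ => hfirst j) (hcount ▸ le_sup (mem_univ i))
  have hbest : ∀ j, Rew (f j) N ≤ Rew (f i) N := fun j =>
    calc Rew (f j) N ≤ optimisticRew (f j) (alg1Counts f t j) N :=
          Rew_le_optimisticRew (hf j).2.2.2 (one_le_two.trans (two_le_alg1Counts f j hwarm)) (hfirst j)
      _ ≤ optimisticRew (f i) N N := by
          simpa [hsup, hpull, hcount] using optimisticRew_le_alg1Pull f (alg1Counts f t) hwarm j
      _ = Rew (f i) N := optimisticRew_self _ _
  exact (OPT_eq_Rew_of_forall_Rew_le f (fun j => (hf j).2.2.1) (by omega) i hbest).symm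
end
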